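/- For each α ∈ {0, 1, −1}, the family of vector fields on ℝ² given by L_n = e^{−nt} ∂_t + e^{−nt}[n + (1/2)n(n−1)α e^{−x}] ∂_x (n ∈ ℤ) is a realization of the Witt algebra: [L_m, L_n] = (m−n)L_{m+n} for all m, n ∈ ℤ. (This is the realization 𝔚₂ of Theorem 1.) -/

import Mathlib

/-!
Every `L_n` has the form `e^{-nt} (∂_t + g_n(x) ∂_x)` with `g_n(x) = n + c_n e^{-x}`,
`c_n = ½ n (n - 1) α`. The bracket of two fields of this shape is
`e^{-(m+n)t} ((m - n) ∂_t + (m g_m - n g_n + g_m g_n' - g_n g_m') ∂_x)`, so the Witt relations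
reduce to the scalar identity `m g_m - n g_n + g_m g_n' - g_n g_m' = (m - n) g_{m+n}`, i.e. to
`(m + n)(c_m - c_n) = (m - n) c_{m+n}`, which holds because `c_m - c_n = ½ α (m - n)(m + n - 1)`.
-/

/-- Lie bracket of smooth vector fields on `ℝ²` (coordinates `(t,x)`), identified with
`C^∞` maps `ℝ² → ℝ²`: `[X,Y](p) = (DY)(p)(X(p)) - (DX)(p)(Y(p))`. -/
noncomputable def lieBracket2 (X Y : ℝ × ℝ → ℝ × ℝ) : ℝ × ℝ → ℝ × ℝ :=
  fun p => fderiv ℝ Y p (X p) - fderiv ℝ X p (Y p)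

/-- The realization `𝔚₂`:
`L_n = e^{-nt} ∂_t + e^{-nt}[n + (1/2)n(n-1)α e^{-x}] ∂_x`. -/
noncomputable def W2field (α : ℝ) (n : ℤ) : ℝ × ℝ → ℝ × ℝ := fun p =>
  (Real.exp (-(n : ℝ) * p.1),
   Real.exp (-(n : ℝ) * p.1) *
     ((n : ℝ) + (1 / 2) * (n : ℝ) * ((n : ℝ) - 1) * α * Real.exp (-p.2)))

open Real

noncomputable def expScaledField (r : ℝ) (g : ℝ → ℝ) : ℝ × ℝ → ℝ × ℝ :=
  fun p => (exp (-r * p.1), exp (-r * p.1) * g p.2)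

lemma fderiv_expScaledField_apply {r : ℝ} {g : ℝ → ℝ} {p : ℝ × ℝ}
    (hg : DifferentiableAt ℝ g p.2) (v : ℝ × ℝ) :
    fderiv ℝ (expScaledField r g) p v =
      (exp (-r * p.1) * (-r * v.1),
        exp (-r * p.1) * (-r * v.1 * g p.2 + deriv g p.2 * v.2)) := by
  have hexp : HasFDerivAt (fun q : ℝ × ℝ => exp (-r * q.1))
      ((exp (-r * p.1) * -r) • ContinuousLinearMap.fst ℝ ℝ ℝ) p := by
    have hd : HasDerivAt (fun t => exp (-r * t)) (exp (-r * p.1) * -r) p.1 := by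
      simpa using ((hasDerivAt_id p.1).const_mul (-r)).exp
    exact hd.comp_hasFDerivAt p hasFDerivAt_fst
  have hg' : HasFDerivAt (fun q : ℝ × ℝ => g q.2)
      (deriv g p.2 • ContinuousLinearMap.snd ℝ ℝ ℝ) p :=
    hg.hasDerivAt.comp_hasFDerivAt p hasFDerivAt_snd
  have hfield : HasFDerivAt (expScaledField r g) _ p := hexp.prodMk (hexp.mul hg')
  rw [hfield.fderiv]
  simp only [ContinuousLinearMap.prod_apply, add_apply, smul_apply,
    ContinuousLinearMap.coe_fst', ContinuousLinearMap.coe_snd', smul_eq_mul, Prod.mk.injEq]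
  constructor <;> ring

lemma lieBracket2_expScaledField {r s : ℝ} {g h : ℝ → ℝ} (hg : Differentiable ℝ g)
    (hh : Differentiable ℝ h) (p : ℝ × ℝ) :
    lieBracket2 (expScaledField r g) (expScaledField s h) p =
      exp (-(r + s) * p.1) • (r - s,
        r * g p.2 - s * h p.2 + g p.2 * deriv h p.2 - h p.2 * deriv g p.2) := by
  have hexp : exp (-(r + s) * p.1) = exp (-r * p.1) * exp (-s * p.1) := by
    rw [← exp_add]; ring_nf
  simp only [lieBracket2, fderiv_expScaledField_apply (hg p.2),
    fderiv_expScaledField_apply (hh p.2), expScaledField, hexp, Prod.mk_sub_mk, Prod.smul_mk,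
    smul_eq_mul, Prod.mk.injEq]
  constructor <;> ring

noncomputable def W2coeff (α n x : ℝ) : ℝ := n + 1 / 2 * n * (n - 1) * α * exp (-x)

lemma W2field_eq_expScaledField (α : ℝ) (n : ℤ) :
    W2field α n = expScaledField n (W2coeff α n) := rfl

lemma hasDerivAt_W2coeff (α n x : ℝ) :
    HasDerivAt (W2coeff α n) (-(1 / 2 * n * (n - 1) * α * exp (-x))) x :=
  ((((hasDerivAt_neg x).exp).const_mul (1 / 2 * n * (n - 1) * α)).const_add n).congr_deriv
    (by ring)

lemma differentiable_W2coeff (α n : ℝ) : Differentiable ℝ (W2coeff α n) :=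
  fun x => (hasDerivAt_W2coeff α n x).differentiableAt

lemma W2coeff_bracket (α m n x : ℝ) :
    m * W2coeff α m x - n * W2coeff α n x
        + W2coeff α m x * deriv (W2coeff α n) x - W2coeff α n x * deriv (W2coeff α m) x
      = (m - n) * W2coeff α (m + n) x := by
  simp only [(hasDerivAt_W2coeff α _ x).deriv, W2coeff]
  ring

theorem W2_realization_general (α : ℝ) :
    ∀ m n : ℤ, lieBracket2 (W2field α m) (W2field α n)
      = fun p => ((m : ℝ) - (n : ℝ)) • W2field α (m + n) p := by
  intro m n
  funext p
  rw [W2field_eq_expScaledField, W2field_eq_expScaledField,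
    lieBracket2_expScaledField (differentiable_W2coeff α m) (differentiable_W2coeff α n),
    W2coeff_bracket, W2field_eq_expScaledField]
  simp only [expScaledField, Int.cast_add, Prod.smul_mk, smul_eq_mul, Prod.mk.injEq]
  constructor <;> ring

/-- For each `α ∈ {0, 1, -1}`, the family `(W2field α n)` is a realization of the Witt
algebra on `ℝ²`: `[L_m, L_n] = (m - n) L_{m+n}` for all `m, n ∈ ℤ`. -/
theorem W2_realization (α : ℝ) (hα : α = 0 ∨ α = 1 ∨ α = -1) :
    ∀ m n : ℤ, lieBracket2 (W2field α m) (W2field α n)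
      = fun p => ((m : ℝ) - (n : ℝ)) • W2field α (m + n) p :=
  W2_realization_general α
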